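/- Let X, Y be coinfinite primitive recursive subsets of ℕ with 0 ∈ X ∩ Y, and let Z₀ be the set with 0 ∈ Z₀ and s+1 ∉ Z₀ iff max(#(0^X)[s+1], #(0^Y)[s+1]) > max(#(0^X)[s], #(0^Y)[s]). Then R_{Z₀} is the least upper bound of R_X and R_Y with respect to ≤_pr: we have R_X ≤_pr R_{Z₀}, R_Y ≤_pr R_{Z₀}, and for every coinfinite primitive recursive V, if R_X ≤_pr R_V and R_Y ≤_pr R_V then R_{Z₀} ≤_pr R_V. -/

import Mathlib

/-- The equivalence relation `R_X`: `x R_X y` iff both in `X` or `x = y`. -/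
def REq (X : Set ℕ) (x y : ℕ) : Prop := (x ∈ X ∧ y ∈ X) ∨ x = y

/-- Primitive recursive reducibility between binary relations on ℕ. -/
def PrRed (R S : ℕ → ℕ → Prop) : Prop :=
  ∃ f : ℕ → ℕ, Primrec f ∧ ∀ x y, R x y ↔ S (f x) (f y)

/-- pr-bireducibility. -/
def PrEquiv (R S : ℕ → ℕ → Prop) : Prop := PrRed R S ∧ PrRed S R

/-- `X` is a primitive recursive set. -/
def PRSet (X : Set ℕ) : Prop :=
  ∃ f : ℕ → Bool, Primrec f ∧ ∀ n, n ∈ X ↔ f n = true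

/-- `#(0^X)[s]`: the number of elements of the complement of `X` that are `≤ s`. -/
noncomputable def zc (X : Set ℕ) (s : ℕ) : ℕ := {k | k ≤ s ∧ k ∉ X}.ncard


/-!
`R_A ≤_pr R_B` is governed by the counting functions `zc`. A reduction `f` sends distinct
non-elements of `A` to distinct `R_B`-classes, at most one of which meets `B`, so
`zc A s ≤ zc B t` whenever `t` bounds `f` on `[0, s]`. Conversely, if
`zc A s ≤ zc B (H s)` with `H` primitive recursive, the `n`-th non-element of `A` can be sent to
the `n`-th non-element of `B`, which a search bounded by `H` finds. The defining property of `Z₀`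
says exactly that `zc Z₀ = max (zc X) (zc Y)`, so a bound for `R_{Z₀}` is the same as a bound
for both `R_X` and `R_Y`.
-/

open Nat

theorem prSet_iff_primrecPred {A : Set ℕ} : PRSet A ↔ PrimrecPred (· ∈ A) := by
  classical
  constructor
  · rintro ⟨f, hf, hA⟩
    exact Primrec.primrecPred (hf.of_eq fun n => by simp [hA])
  · intro h
    exact ⟨fun n => decide (n ∈ A), h.decide, fun n => by simp⟩

theorem Primrec.nat_count {p : ℕ → Prop} [DecidablePred p] (hp : PrimrecPred p) :
    Primrec (count p) :=
  (Primrec.list_length.comp ((Primrec.listFilter hp).comp Primrec.list_range)).of_eq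
    fun n => by simp [count, List.countP_eq_length_filter]

theorem Primrec.nat_list_sum : Primrec (List.sum : List ℕ → ℕ) :=
  (Primrec.list_foldr .id (.const 0)
    (Primrec.nat_add.comp (Primrec.fst.comp .snd) (Primrec.snd.comp .snd)).to₂).of_eq
    fun _ => List.sum_eq_foldr.symm

theorem Primrec.exists_prefix_bound {f : ℕ → ℕ} (hf : Primrec f) :
    ∃ H : ℕ → ℕ, Primrec H ∧ ∀ k s, k ≤ s → f k ≤ H s :=
  ⟨fun s => ((List.range (s + 1)).map f).sum,
    Primrec.nat_list_sum.comp
      (Primrec.list_map (Primrec.list_range.comp .succ) (hf.comp .snd).to₂),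
    fun k s hks => List.le_sum_of_mem (List.mem_map_of_mem (List.mem_range.2 (by omega)))⟩

theorem Nat.exists_count_eq_of_lt_count {p : ℕ → Prop} [DecidablePred p] {k n : ℕ}
    (h : k < count p n) : ∃ m < n, p m ∧ count p m = k := by
  have hk : ∀ hf : (Set.ofPred p).Finite, k < hf.toFinset.card :=
    fun hf => h.trans_le (count_le_card hf n)
  exact ⟨nth p k, nth_lt_of_lt_count h, nth_mem k hk, count_nth hk⟩

section zc

variable {A : Set ℕ}

theorem zc_eq_count [DecidablePred (· ∈ A)] (s : ℕ) : zc A s = count (· ∉ A) (s + 1) := by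
  rw [zc, count_eq_card_filter_range, ← Set.ncard_coe_finset]
  congr 1
  ext k
  simp

theorem zc_zero_of_mem (h : 0 ∈ A) : zc A 0 = 0 := by
  classical
  simp [zc_eq_count, count_one, h]

theorem zc_succ [DecidablePred (· ∈ A)] (s : ℕ) :
    zc A (s + 1) = zc A s + if s + 1 ∈ A then 0 else 1 := by
  rw [zc_eq_count, zc_eq_count, count_succ]
  split_ifs <;> simp_all

theorem zc_succ_le (s : ℕ) : zc A (s + 1) ≤ zc A s + 1 := by
  classical
  rw [zc_succ]
  split_ifs <;> omega

theorem zc_mono : Monotone (zc A) := by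
  classical
  intro s t hst
  simp only [zc_eq_count]
  exact count_monotone _ (by omega)

theorem PRSet.primrec_zc (hA : PRSet A) : Primrec (zc A) := by
  classical
  exact ((Primrec.nat_count (prSet_iff_primrecPred.1 hA).not).comp .succ).of_eq
    fun s => (zc_eq_count s).symm

theorem mem_iff_zc_eq (n : ℕ) : n ∈ A ↔ zc A n = if n = 0 then 0 else zc A (n - 1) := by
  classical
  cases n with
  | zero => simp [zc_eq_count, count_one]
  | succ m => rw [zc_succ]; simp

theorem PRSet.of_primrec_zc (h : Primrec (zc A)) : PRSet A :=
  prSet_iff_primrecPred.2 <| PrimrecPred.of_eq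
    (Primrec.eq.comp h (Primrec.ite (Primrec.eq.comp .id (.const 0)) (.const 0) (h.comp .pred)))
    fun n => (mem_iff_zc_eq n).symm

end zc

theorem req_iff_req_of_injOn {A B : Set ℕ} {f : ℕ → ℕ} {c : ℕ}
    (hA : Set.EqOn f (fun _ => c) A) (hmaps : Set.MapsTo f Aᶜ Bᶜ) (hinj : Set.InjOn f Aᶜ)
    (hc : c ∉ f '' Aᶜ) (x y : ℕ) : REq A x y ↔ REq B (f x) (f y) := by
  have hcx : ∀ x ∉ A, f x ≠ c := fun x hx h => hc ⟨x, hx, h⟩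
  have hfB : ∀ x ∉ A, f x ∉ B := fun x hx => hmaps hx
  by_cases hx : x ∈ A <;> by_cases hy : y ∈ A
  · simp [REq, hx, hy, hA hx, hA hy]
  · have hxy : x ≠ y := by rintro rfl; exact hy hx
    simp [REq, hx, hy, hA hx, hxy, (hcx y hy).symm, hfB y hy]
  · have hxy : x ≠ y := by rintro rfl; exact hx hy
    simp [REq, hx, hy, hA hy, hxy, hcx x hx, hfB x hx]
  · simp [REq, hx, hy, hfB x hx, hinj.eq_iff hx hy]

theorem prRed_req_empty {A : Set ℕ} (hA : PRSet A) (hA0 : 0 ∈ A) : PrRed (REq A) (REq ∅) := by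
  classical
  refine ⟨fun x => if x ∈ A then 0 else x,
    Primrec.ite (prSet_iff_primrecPred.1 hA) (.const 0) .id,
    req_iff_req_of_injOn (c := 0) ?_ ?_ ?_ ?_⟩
  · intro x hx; simp [hx]
  · intro x _; simp
  · intro x (hx : x ∉ A) y (hy : y ∉ A) h; simpa [hx, hy] using h
  · rintro ⟨x, hx, h⟩; simp_all

theorem prRed_of_zc_le {A B : Set ℕ} {H : ℕ → ℕ} (hA : PRSet A) (hB : PRSet B)
    (hA0 : 0 ∈ A) (hH : Primrec H) (hle : ∀ s, zc A s ≤ zc B (H s)) :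
    PrRed (REq A) (REq B) := by
  classical
  rcases B.eq_empty_or_nonempty with rfl | ⟨b, hb⟩
  · exact prRed_req_empty hA hA0
  have hAp := prSet_iff_primrecPred.1 hA
  have hBp := prSet_iff_primrecPred.1 hB
  -- `N x` is the non-element of `B` with as many non-elements below it as `x` has outside `A`
  set N : ℕ → ℕ := fun x => (H x).findGreatest
    (fun y => y ∉ B ∧ count (· ∉ B) y = count (· ∉ A) x)
  have hNp : Primrec N := Primrec.nat_findGreatest hH <|
    (hBp.not.comp Primrec.snd).and <| Primrec.eq.comp
      ((Primrec.nat_count hBp.not).comp .snd) ((Primrec.nat_count hAp.not).comp .fst)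
  have hNspec : ∀ x ∉ A, N x ∉ B ∧ count (· ∉ B) (N x) = count (· ∉ A) x := by
    intro x hx
    have hlt : count (· ∉ A) x < count (· ∉ B) (H x + 1) := calc
      count (· ∉ A) x < count (· ∉ A) (x + 1) := count_lt_count_succ_iff.2 hx
      _ = zc A x := (zc_eq_count x).symm
      _ ≤ zc B (H x) := hle x
      _ = count (· ∉ B) (H x + 1) := zc_eq_count _
    obtain ⟨y, hy, hyB, hcount⟩ := exists_count_eq_of_lt_count hlt
    exact findGreatest_spec (P := fun y => y ∉ B ∧ count (· ∉ B) y = count (· ∉ A) x)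
      (by omega : y ≤ H x) ⟨hyB, hcount⟩
  refine ⟨fun x => if x ∈ A then b else N x, Primrec.ite hAp (.const b) hNp,
    req_iff_req_of_injOn (c := b) ?_ ?_ ?_ ?_⟩
  · intro x hx; simp [hx]
  · intro x (hx : x ∉ A); simpa [hx] using (hNspec x hx).1
  · intro x (hx : x ∉ A) y (hy : y ∉ A) h
    simp only [hx, hy, if_false] at h
    exact count_injective hx hy (by rw [← (hNspec x hx).2, ← (hNspec y hy).2, h])
  · rintro ⟨x, hx : x ∉ A, h⟩
    simp only [hx, if_false] at h
    exact (hNspec x hx).1 (h ▸ hb)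

theorem zc_le_zc_of_req_iff {A V : Set ℕ} {f : ℕ → ℕ} (hA0 : 0 ∈ A)
    (hred : ∀ x y, REq A x y ↔ REq V (f x) (f y)) {s t : ℕ} (hft : ∀ k ≤ s, f k ≤ t) :
    zc A s ≤ zc V t := by
  classical
  have hsep : ∀ x ∉ A, ∀ y, x ≠ y → f x ≠ f y ∧ ¬(f x ∈ V ∧ f y ∈ V) := by
    intro x hx y hxy
    have := (hred x y).not.1 (by simp [REq, hx, hxy])
    simp only [REq, not_or] at this
    exact ⟨this.2, this.1⟩
  -- at most one non-element of `A` is sent into `V`; it is redirected to `f 0`, which is not in `V`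
  refine Set.ncard_le_ncard_of_injOn (fun k => if f k ∈ V then f 0 else f k) ?_ ?_
    ((Set.finite_Iic t).subset fun k hk => hk.1)
  · rintro k ⟨hks, hkA⟩
    have hk0 := hsep k hkA 0 (by rintro rfl; exact hkA hA0)
    by_cases hkV : f k ∈ V
    · simp only [hkV, if_true, Set.mem_ofPred_eq]
      exact ⟨hft 0 (zero_le s), fun h => hk0.2 ⟨hkV, h⟩⟩
    · simpa [hkV] using hft k hks
  · rintro k ⟨-, hkA⟩ k' ⟨-, hk'A⟩ heq
    by_contra hne
    have h0 := hsep k hkA 0 (by rintro rfl; exact hkA hA0)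
    have h0' := hsep k' hk'A 0 (by rintro rfl; exact hk'A hA0)
    have hkk' := hsep k hkA k' hne
    simp only at heq
    split_ifs at heq <;> tauto

theorem PrRed.exists_zc_le {A V : Set ℕ} (hA0 : 0 ∈ A) (h : PrRed (REq A) (REq V)) :
    ∃ H : ℕ → ℕ, Primrec H ∧ ∀ s, zc A s ≤ zc V (H s) := by
  obtain ⟨f, hf, hred⟩ := h
  obtain ⟨H, hH, hfH⟩ := hf.exists_prefix_bound
  exact ⟨H, hH, fun s => zc_le_zc_of_req_iff hA0 hred fun k hk => hfH k s hk⟩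

theorem zc_eq_of_succ_notMem_iff {Z : Set ℕ} {F : ℕ → ℕ} (hZ0 : 0 ∈ Z) (hF0 : F 0 = 0)
    (hFmono : Monotone F) (hFstep : ∀ s, F (s + 1) ≤ F s + 1)
    (hZ : ∀ s, s + 1 ∉ Z ↔ F s < F (s + 1)) : zc Z = F := by
  classical
  funext s
  induction s with
  | zero => rw [zc_zero_of_mem hZ0, hF0]
  | succ s ih =>
    have := hFmono (le_add_right s 1)
    have := hFstep s
    rw [zc_succ, ih]
    split_ifs with h
    · have := (hZ s).not.1 (not_not.2 h); omega
    · have := (hZ s).1 h; omega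

theorem stmt_8_general (X Y Z₀ : Set ℕ) (hX : PRSet X) (hY : PRSet Y)
    (hX0 : 0 ∈ X) (hY0 : 0 ∈ Y)
    (hZ0 : 0 ∈ Z₀)
    (hZ : ∀ s, (s + 1 ∉ Z₀ ↔
      max (zc X (s+1)) (zc Y (s+1)) > max (zc X s) (zc Y s))) :
    PrRed (REq X) (REq Z₀) ∧ PrRed (REq Y) (REq Z₀) ∧
      ∀ V : Set ℕ, PRSet V → Vᶜ.Infinite →
        PrRed (REq X) (REq V) → PrRed (REq Y) (REq V) →
          PrRed (REq Z₀) (REq V) := by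
  have hzcZ : zc Z₀ = fun s => max (zc X s) (zc Y s) :=
    zc_eq_of_succ_notMem_iff hZ0 (by simp [zc_zero_of_mem hX0, zc_zero_of_mem hY0])
      (zc_mono.sup zc_mono)
      (fun s => by have := zc_succ_le (A := X) s; have := zc_succ_le (A := Y) s; omega) hZ
  have hZp : PRSet Z₀ :=
    .of_primrec_zc (hzcZ ▸ Primrec.nat_max.comp hX.primrec_zc hY.primrec_zc)
  refine ⟨prRed_of_zc_le hX hZp hX0 .id fun s => ?_,
    prRed_of_zc_le hY hZp hY0 .id fun s => ?_, ?_⟩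
  · simp [hzcZ]
  · simp [hzcZ]
  intro V hV _ hXV hYV
  obtain ⟨HX, hHX, hXle⟩ := hXV.exists_zc_le hX0
  obtain ⟨HY, hHY, hYle⟩ := hYV.exists_zc_le hY0
  refine prRed_of_zc_le hZp hV hZ0 (Primrec.nat_max.comp hHX hHY) fun s => ?_
  rw [hzcZ, zc_mono.map_max]
  exact max_le_max (hXle s) (hYle s)

theorem stmt_8 (X Y Z₀ : Set ℕ) (hX : PRSet X) (hY : PRSet Y)
    (hXc : Xᶜ.Infinite) (hYc : Yᶜ.Infinite) (hX0 : 0 ∈ X) (hY0 : 0 ∈ Y)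
    (hZ0 : 0 ∈ Z₀)
    (hZ : ∀ s, (s + 1 ∉ Z₀ ↔
      max (zc X (s+1)) (zc Y (s+1)) > max (zc X s) (zc Y s))) :
    PrRed (REq X) (REq Z₀) ∧ PrRed (REq Y) (REq Z₀) ∧
      ∀ V : Set ℕ, PRSet V → Vᶜ.Infinite →
        PrRed (REq X) (REq V) → PrRed (REq Y) (REq V) →
          PrRed (REq Z₀) (REq V) :=
  stmt_8_general X Y Z₀ hX hY hX0 hY0 hZ0 hZ
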